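/- arXiv:1803.07071 — 5 statements merged into one kernel-verified Lean document; each statement's English description precedes it below -/
import Mathlib

section
/- Let a be an integer and let v1 = (a+1,-a,-a,a,a), v2 = (a,-a-1,-a,a,-a), v3 = (-a,a,-a,-a-1,-a), v4 = (a+1,-a,-a+1,-a-1,-a), v5 = (a-1,a+1,a+1,-a+1,-a-1) be the rows of a 5×5 integer matrix M. Then det(M) = ±(16a^5 + 16a^4 + 32a^3 + 16a^2 + 5a + 1). -/
theorem lattice_det_class0 (a : ℤ) :
    let M : Matrix (Fin 5) (Fin 5) ℤ := Matrix.of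
      ![![a + 1, -a, -a, a, a],
        ![a, -a - 1, -a, a, -a],
        ![-a, a, -a, -a - 1, -a],
        ![a + 1, -a, -a + 1, -a - 1, -a],
        ![a - 1, a + 1, a + 1, -a + 1, -a - 1]]
    M.det = 16 * a ^ 5 + 16 * a ^ 4 + 32 * a ^ 3 + 16 * a ^ 2 + 5 * a + 1 ∨
    M.det = -(16 * a ^ 5 + 16 * a ^ 4 + 32 * a ^ 3 + 16 * a ^ 2 + 5 * a + 1) := by
  intro M
  left
  simp [M, Matrix.det_succ_row_zero, Fin.sum_univ_succ, Fin.succAbove]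
  ring
end

section
/- Let a ≥ 4 be an integer and let v1,...,v16 be the sixteen vectors in Z^5 defined by v1 = (a+1,-a,-a,a,a), v2 = (a,-a-1,-a,a,-a), v3 = (-a,a,-a,-a-1,-a), v4 = (a+1,-a,-a+1,-a-1,-a), v5 = (a-1,a+1,a+1,-a+1,-a-1), v6 = (-a+1,a+1,-a,-a-1,a), v7 = (a+2,-a+1,-a+1,-a-1,a), v8 = (a,a+2,a+1,-a+1,a-1), v9 = (-a,a,-a-1,a,a), v10 = (a,a+1,-a+1,-a,-a-1), v11 = (a-1,a+1,a,a+2,a-1), v12 = (-a-1,a-1,-a-1,a,-a), v13 = (a-2,a,a,a+2,-a-1), v14 = (a-1,a,-a,a+1,-a-1), v15 = (a,a+1,-a,a+1,a-1), v16 = (a+1,a+2,-a+1,-a,a-1). Then the 32 sign patterns (sequences of signs of the five coordinates) of the vectors ±v1,...,±v16 are pairwise distinct, and every coordinate of every v_i is nonzero. -/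
private def Smat : Fin 16 → Fin 5 → ℤ :=
  ![![1,-1,-1,1,1],
    ![1,-1,-1,1,-1],
    ![-1,1,-1,-1,-1],
    ![1,-1,-1,-1,-1],
    ![1,1,1,-1,-1],
    ![-1,1,-1,-1,1],
    ![1,-1,-1,-1,1],
    ![1,1,1,-1,1],
    ![-1,1,-1,1,1],
    ![1,1,-1,-1,-1],
    ![1,1,1,1,1],
    ![-1,1,-1,1,-1],
    ![1,1,1,1,-1],
    ![1,1,-1,1,-1],
    ![1,1,-1,1,1],
    ![1,1,-1,-1,1]]

set_option maxHeartbeats 2000000 in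
theorem sixteen_vectors_orthants (a : ℤ) (ha : 4 ≤ a) :
    let vs : Fin 16 → Fin 5 → ℤ :=
      ![![a + 1, -a, -a, a, a],
        ![a, -a - 1, -a, a, -a],
        ![-a, a, -a, -a - 1, -a],
        ![a + 1, -a, -a + 1, -a - 1, -a],
        ![a - 1, a + 1, a + 1, -a + 1, -a - 1],
        ![-a + 1, a + 1, -a, -a - 1, a],
        ![a + 2, -a + 1, -a + 1, -a - 1, a],
        ![a, a + 2, a + 1, -a + 1, a - 1],
        ![-a, a, -a - 1, a, a],
        ![a, a + 1, -a + 1, -a, -a - 1],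
        ![a - 1, a + 1, a, a + 2, a - 1],
        ![-a - 1, a - 1, -a - 1, a, -a],
        ![a - 2, a, a, a + 2, -a - 1],
        ![a - 1, a, -a, a + 1, -a - 1],
        ![a, a + 1, -a, a + 1, a - 1],
        ![a + 1, a + 2, -a + 1, -a, a - 1]]
    (Function.Injective fun p : Fin 16 × Bool =>
      fun i : Fin 5 => Int.sign ((if p.2 then 1 else -1) * vs p.1 i)) ∧
    ∀ j : Fin 16, ∀ i : Fin 5, vs j i ≠ 0 := by
  intro vs
  have h80 : ∀ j i, (vs j i).sign = Smat j i := by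
    simp only [vs, Smat, Fin.forall_fin_succ, IsEmpty.forall_iff, Matrix.cons_val_zero,
      Matrix.cons_val_succ, and_true]
    repeat' apply And.intro
    all_goals
      first
        | (rw [Int.sign_eq_one_iff_pos]; omega)
        | (rw [Int.sign_eq_neg_one_iff_neg]; omega)
  have hS : ∀ j i, Smat j i = 1 ∨ Smat j i = -1 := by
    simp only [Smat, Fin.forall_fin_succ, IsEmpty.forall_iff, Matrix.cons_val_zero,
      Matrix.cons_val_succ, and_true]
    norm_num
  constructor
  · have key : (fun p : Fin 16 × Bool =>
        fun i : Fin 5 => Int.sign ((if p.2 then 1 else -1) * vs p.1 i)) =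
        fun p i => (if p.2 then (1:ℤ) else -1) * Smat p.1 i := by
      funext p i
      obtain ⟨j, b⟩ := p
      cases b <;> simp [Int.sign_neg, h80]
    rw [key]
    decide
  · intro j i h
    have h1 := h80 j i
    rw [h, Int.sign_zero] at h1
    rcases hS j i with h2 | h2 <;> omega
end

section
/- Let a be an integer and let M be the 5×5 integer matrix with rows v1 = (a−1,a,−a,a,a−1), v2 = (a−2,−a−1,−a−1,−a+2,a), v3 = (a−1,−a,−a+1,a,−a), v4 = (a−1,a−1,−a−1,−a+1,a), v5 = (a,−a−1,a−1,−a,−a+2). Then det(M) = ±(16a^5 − 32a^4 + 52a^3 − 40a^2 + 14a − 2). -/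
set_option maxHeartbeats 2000000


theorem lattice_det_class1 (a : ℤ) :
    let M : Matrix (Fin 5) (Fin 5) ℤ := Matrix.of
      ![![a - 1, a, -a, a, a - 1],
        ![a - 2, -a - 1, -a - 1, -a + 2, a],
        ![a - 1, -a, -a + 1, a, -a],
        ![a - 1, a - 1, -a - 1, -a + 1, a],
        ![a, -a - 1, a - 1, -a, -a + 2]]
    M.det = 16 * a ^ 5 - 32 * a ^ 4 + 52 * a ^ 3 - 40 * a ^ 2 + 14 * a - 2 ∨
    M.det = -(16 * a ^ 5 - 32 * a ^ 4 + 52 * a ^ 3 - 40 * a ^ 2 + 14 * a - 2) := by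
  intro M
  have h : M.det = 16 * a ^ 5 - 32 * a ^ 4 + 52 * a ^ 3 - 40 * a ^ 2 + 14 * a - 2 ∨
      M.det = -(16 * a ^ 5 - 32 * a ^ 4 + 52 * a ^ 3 - 40 * a ^ 2 + 14 * a - 2) := by
    left
    show Matrix.det _ = _
    simp only [M, Matrix.det_succ_row_zero, Fin.sum_univ_succ, Matrix.det_fin_zero,
      Matrix.submatrix_apply, Matrix.of_apply, Matrix.cons_val', Matrix.cons_val_zero,
      Matrix.cons_val_succ, Matrix.empty_val', Matrix.cons_val_fin_one, Fin.succAbove,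
      Fin.val_zero, Fin.val_succ, Finset.sum_empty, Matrix.cons_val_one, Matrix.head_cons,
      Matrix.head_fin_const, Fin.sum_univ_zero]
    norm_num [Fin.lt_def, Fin.castSucc, Fin.castAdd, Fin.castLE, Fin.succ]
    ring
  exact h
end

section
/- Let a be an integer and let M be the 5×5 integer matrix with rows v1 = (3a+1,−3a−1,−3a−1,−3a,−3a−2), v2 = (3a+1,3a+1,−3a−1,−3a−1,−3a−1), v3 = (3a,3a,3a+1,−3a−3,3a+1), v4 = (3a+2,−3a,−3a,3a+2,−3a−1), v5 = (3a+1,3a,−3a−1,−3a−2,3a+1). Then det(M) = ±(3888a^5 + 6480a^4 + 4968a^3 + 2088a^2 + 471a + 45). -/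
theorem lattice_det_class2 (a : ℤ) :
    let M : Matrix (Fin 5) (Fin 5) ℤ := Matrix.of
      ![![3 * a + 1, -3 * a - 1, -3 * a - 1, -3 * a, -3 * a - 2],
        ![3 * a + 1, 3 * a + 1, -3 * a - 1, -3 * a - 1, -3 * a - 1],
        ![3 * a, 3 * a, 3 * a + 1, -3 * a - 3, 3 * a + 1],
        ![3 * a + 2, -3 * a, -3 * a, 3 * a + 2, -3 * a - 1],
        ![3 * a + 1, 3 * a, -3 * a - 1, -3 * a - 2, 3 * a + 1]]
    M.det = 3888 * a ^ 5 + 6480 * a ^ 4 + 4968 * a ^ 3 + 2088 * a ^ 2 + 471 * a + 45 ∨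
    M.det = -(3888 * a ^ 5 + 6480 * a ^ 4 + 4968 * a ^ 3 + 2088 * a ^ 2 + 471 * a + 45) := by
  left
  simp [Matrix.det_succ_row_zero, Fin.sum_univ_succ, Fin.succAbove]
  ring
end

section
/- Let a be an integer and let M be the 5×5 integer matrix with rows v1 = (a−1,a,−a,a,a), v2 = (a,a−1,−a,a,−a), v3 = (a,a,a,a−1,a), v4 = (−a+1,−a,a+1,a−1,a), v5 = (−a−1,a−1,−a+1,a+1,a−1). Then det(M) = ±(16a^5 − 16a^4 + 32a^3 − 16a^2 + 5a − 1). -/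
set_option maxHeartbeats 4000000

@[simp] lemma fsa0 : ((0:Fin 5).succAbove (0:Fin 4)) = (1:Fin 5) := by decide
@[simp] lemma fsa1 : ((0:Fin 5).succAbove (1:Fin 4)) = (2:Fin 5) := by decide
@[simp] lemma fsa2 : ((0:Fin 5).succAbove (2:Fin 4)) = (3:Fin 5) := by decide
@[simp] lemma fsa3 : ((0:Fin 5).succAbove (3:Fin 4)) = (4:Fin 5) := by decide
@[simp] lemma fsa4 : ((1:Fin 5).succAbove (0:Fin 4)) = (0:Fin 5) := by decide
@[simp] lemma fsa5 : ((1:Fin 5).succAbove (1:Fin 4)) = (2:Fin 5) := by decide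
@[simp] lemma fsa6 : ((1:Fin 5).succAbove (2:Fin 4)) = (3:Fin 5) := by decide
@[simp] lemma fsa7 : ((1:Fin 5).succAbove (3:Fin 4)) = (4:Fin 5) := by decide
@[simp] lemma fsa8 : ((2:Fin 5).succAbove (0:Fin 4)) = (0:Fin 5) := by decide
@[simp] lemma fsa9 : ((2:Fin 5).succAbove (1:Fin 4)) = (1:Fin 5) := by decide
@[simp] lemma fsa10 : ((2:Fin 5).succAbove (2:Fin 4)) = (3:Fin 5) := by decide
@[simp] lemma fsa11 : ((2:Fin 5).succAbove (3:Fin 4)) = (4:Fin 5) := by decide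
@[simp] lemma fsa12 : ((3:Fin 5).succAbove (0:Fin 4)) = (0:Fin 5) := by decide
@[simp] lemma fsa13 : ((3:Fin 5).succAbove (1:Fin 4)) = (1:Fin 5) := by decide
@[simp] lemma fsa14 : ((3:Fin 5).succAbove (2:Fin 4)) = (2:Fin 5) := by decide
@[simp] lemma fsa15 : ((3:Fin 5).succAbove (3:Fin 4)) = (4:Fin 5) := by decide
@[simp] lemma fsa16 : ((4:Fin 5).succAbove (0:Fin 4)) = (0:Fin 5) := by decide
@[simp] lemma fsa17 : ((4:Fin 5).succAbove (1:Fin 4)) = (1:Fin 5) := by decide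
@[simp] lemma fsa18 : ((4:Fin 5).succAbove (2:Fin 4)) = (2:Fin 5) := by decide
@[simp] lemma fsa19 : ((4:Fin 5).succAbove (3:Fin 4)) = (3:Fin 5) := by decide
@[simp] lemma fsa20 : ((0:Fin 4).succAbove (0:Fin 3)) = (1:Fin 4) := by decide
@[simp] lemma fsa21 : ((0:Fin 4).succAbove (1:Fin 3)) = (2:Fin 4) := by decide
@[simp] lemma fsa22 : ((0:Fin 4).succAbove (2:Fin 3)) = (3:Fin 4) := by decide
@[simp] lemma fsa23 : ((1:Fin 4).succAbove (0:Fin 3)) = (0:Fin 4) := by decide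
@[simp] lemma fsa24 : ((1:Fin 4).succAbove (1:Fin 3)) = (2:Fin 4) := by decide
@[simp] lemma fsa25 : ((1:Fin 4).succAbove (2:Fin 3)) = (3:Fin 4) := by decide
@[simp] lemma fsa26 : ((2:Fin 4).succAbove (0:Fin 3)) = (0:Fin 4) := by decide
@[simp] lemma fsa27 : ((2:Fin 4).succAbove (1:Fin 3)) = (1:Fin 4) := by decide
@[simp] lemma fsa28 : ((2:Fin 4).succAbove (2:Fin 3)) = (3:Fin 4) := by decide
@[simp] lemma fsa29 : ((3:Fin 4).succAbove (0:Fin 3)) = (0:Fin 4) := by decide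
@[simp] lemma fsa30 : ((3:Fin 4).succAbove (1:Fin 3)) = (1:Fin 4) := by decide
@[simp] lemma fsa31 : ((3:Fin 4).succAbove (2:Fin 3)) = (2:Fin 4) := by decide
@[simp] lemma fsa32 : Fin.castSucc (0:Fin 4) = (0:Fin 5) := by decide
@[simp] lemma fsa33 : Fin.castSucc (1:Fin 4) = (1:Fin 5) := by decide
@[simp] lemma fsa34 : Fin.castSucc (2:Fin 4) = (2:Fin 5) := by decide
@[simp] lemma fsa35 : Fin.castSucc (3:Fin 4) = (3:Fin 5) := by decide
@[simp] lemma fsa36 : Fin.castSucc (0:Fin 3) = (0:Fin 4) := by decide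
@[simp] lemma fsa37 : Fin.castSucc (1:Fin 3) = (1:Fin 4) := by decide
@[simp] lemma fsa38 : Fin.castSucc (2:Fin 3) = (2:Fin 4) := by decide
@[simp] lemma fsa39 : Fin.castSucc (0:Fin 2) = (0:Fin 3) := by decide
@[simp] lemma fsa40 : Fin.castSucc (1:Fin 2) = (1:Fin 3) := by decide
@[simp] lemma fsa41 : Fin.succ (0:Fin 4) = (1:Fin 5) := by decide
@[simp] lemma fsa42 : Fin.succ (1:Fin 4) = (2:Fin 5) := by decide
@[simp] lemma fsa43 : Fin.succ (2:Fin 4) = (3:Fin 5) := by decide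
@[simp] lemma fsa44 : Fin.succ (3:Fin 4) = (4:Fin 5) := by decide
@[simp] lemma fsa45 : Fin.succ (0:Fin 3) = (1:Fin 4) := by decide
@[simp] lemma fsa46 : Fin.succ (1:Fin 3) = (2:Fin 4) := by decide
@[simp] lemma fsa47 : Fin.succ (2:Fin 3) = (3:Fin 4) := by decide
@[simp] lemma fsa48 : Fin.succ (0:Fin 2) = (1:Fin 3) := by decide
@[simp] lemma fsa49 : Fin.succ (1:Fin 2) = (2:Fin 3) := by decide

theorem lattice_det_class4 (a : ℤ) :
    let M : Matrix (Fin 5) (Fin 5) ℤ := Matrix.of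
      ![![a - 1, a, -a, a, a],
        ![a, a - 1, -a, a, -a],
        ![a, a, a, a - 1, a],
        ![-a + 1, -a, a + 1, a - 1, a],
        ![-a - 1, a - 1, -a + 1, a + 1, a - 1]]
    M.det = 16 * a ^ 5 - 16 * a ^ 4 + 32 * a ^ 3 - 16 * a ^ 2 + 5 * a - 1 ∨
    M.det = -(16 * a ^ 5 - 16 * a ^ 4 + 32 * a ^ 3 - 16 * a ^ 2 + 5 * a - 1) := by
  intro M
  left
  show Matrix.det _ = _
  simp [M, Matrix.det_succ_row_zero, Fin.sum_univ_succ,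
    Matrix.cons_val_two, Matrix.cons_val_three, Matrix.cons_val_four]
  ring
end
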